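/- arXiv:1912.03342 — 2 statements merged into one kernel-verified Lean document; each statement's English description precedes it below -/
import Mathlib

section
/- For every infinite cardinal λ there exists a C-sequence vec C over λ⁺ with χ(vec C) = cf(λ); in particular, cf(λ) ∈ spec(λ⁺). -/
noncomputable section

open Set

namespace CSeq

/-- `#s = c`, phrased with a universe lift (sets of ordinals live in `Type 1`). -/
def MkEq {α : Type 1} (s : Set α) (c : Cardinal.{0}) : Prop :=
  Cardinal.mk s = Cardinal.lift.{1} c

def MkLe {α : Type 1} (s : Set α) (c : Cardinal.{0}) : Prop :=
  Cardinal.mk s ≤ Cardinal.lift.{1} c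

def MkLt {α : Type 1} (s : Set α) (c : Cardinal.{0}) : Prop :=
  Cardinal.mk s < Cardinal.lift.{1} c

/-- The strict supremum `ssup(a)` of a set of ordinals. -/
def ssup (a : Set Ordinal.{0}) : Ordinal.{0} := sSup ((· + 1) '' a)

/-- `acc⁺(a) = {α < ssup a | sup (a ∩ α) = α > 0}`. -/
def accPlus (a : Set Ordinal.{0}) : Set Ordinal.{0} :=
  {α | α < ssup a ∧ 0 < α ∧ sSup (a ∩ Iio α) = α}

/-- `acc(a) = a ∩ acc⁺(a)`. -/
def acc (a : Set Ordinal.{0}) : Set Ordinal.{0} := a ∩ accPlus a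

/-- A set of ordinals is closed below `β`. -/
def IsClosedIn (C : Set Ordinal.{0}) (β : Ordinal.{0}) : Prop :=
  ∀ α, α < β → 0 < α → sSup (C ∩ Iio α) = α → α ∈ C

/-- A club (closed and unbounded set) in `β`. -/
def IsClubIn (C : Set Ordinal.{0}) (β : Ordinal.{0}) : Prop :=
  C ⊆ Iio β ∧ (∀ α < β, ∃ γ ∈ C, α ≤ γ) ∧ IsClosedIn C β

/-- A stationary subset of `β`: one meeting every club in `β`. -/
def IsStationaryIn (S : Set Ordinal.{0}) (β : Ordinal.{0}) : Prop :=
  ∀ C, IsClubIn C β → (S ∩ C).Nonempty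

/-- A C-sequence over a set `Γ` of ordinals. -/
def IsCSeqOn (Γ : Set Ordinal.{0}) (C : Ordinal.{0} → Set Ordinal.{0}) : Prop :=
  ∀ β ∈ Γ, C β ⊆ Iio β ∧ IsClosedIn (C β) β ∧ sSup (C β) = sSup (Iio β)

/-- A C-sequence over `κ`. -/
def IsCSeq (κ : Ordinal.{0}) (C : Ordinal.{0} → Set Ordinal.{0}) : Prop :=
  IsCSeqOn (Iio κ) C

/-- The covering relation underlying the C-sequence number: there are `Δ ∈ [κ]^κ` and
`b : κ → [Γ]^χ` with `Δ ∩ α ⊆ ⋃_{β ∈ b α} C β` for all `α < κ`. -/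
def CSeqCovers (κ : Cardinal.{0}) (Γ : Set Ordinal.{0})
    (C : Ordinal.{0} → Set Ordinal.{0}) (χ : Cardinal.{0}) : Prop :=
  ∃ (Δ : Set Ordinal.{0}) (b : Ordinal.{0} → Set Ordinal.{0}),
    Δ ⊆ Iio κ.ord ∧ MkEq Δ κ ∧
    (∀ α < κ.ord, b α ⊆ Γ ∧ MkEq (b α) χ) ∧
    ∀ α < κ.ord, Δ ∩ Iio α ⊆ ⋃ β ∈ b α, C β

/-- `χ(vec C)` for a C-sequence over `Γ ⊆ κ`. -/
def chiOfOn (κ : Cardinal.{0}) (Γ : Set Ordinal.{0})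
    (C : Ordinal.{0} → Set Ordinal.{0}) : Cardinal.{0} :=
  sInf {χ : Cardinal.{0} | χ ≤ κ ∧ CSeqCovers κ Γ C χ}

/-- `χ(vec C)` for a C-sequence over `κ`. -/
def chiOf (κ : Cardinal.{0}) (C : Ordinal.{0} → Set Ordinal.{0}) : Cardinal.{0} :=
  chiOfOn κ (Iio κ.ord) C

/-- The C-sequence number `χ(κ)`. -/
def chiNum (κ : Cardinal.{0}) : Cardinal.{0} :=
  sInf {χ : Cardinal.{0} | χ ≤ κ ∧ ∀ C, IsCSeq κ.ord C → CSeqCovers κ (Iio κ.ord) C χ}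

/-- The C-sequence spectrum of `κ`: the infinite values of `χ(vec C)`. -/
def spec (κ : Cardinal.{0}) : Set Cardinal.{0} :=
  {χ | Cardinal.aleph0 ≤ χ ∧ ∃ C, IsCSeq κ.ord C ∧ chiOf κ C = χ}

/-- `sup (reg κ)`, the supremum of the infinite regular cardinals below `κ`. -/
def supReg (κ : Cardinal.{0}) : Cardinal.{0} :=
  sSup {ν : Cardinal.{0} | ν.IsRegular ∧ ν < κ}

/-- `acc(κ)`: the set of nonzero limit ordinals below `κ`. -/
def accOrd (κ : Ordinal.{0}) : Set Ordinal.{0} := {β | β < κ ∧ Order.IsSuccLimit β}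

/-- `Tr(S)`: the set of `β < κ` of uncountable cofinality in which `S` reflects. -/
def TrSet (κ : Ordinal.{0}) (S : Set Ordinal.{0}) : Set Ordinal.{0} :=
  {β | β < κ ∧ Cardinal.aleph0 < β.cof ∧ IsStationaryIn (S ∩ Iio β) β}

/-- The order type of a set of ordinals (as an ordinal one universe up). -/
def otp (s : Set Ordinal.{0}) : Ordinal.{1} :=
  Ordinal.type (Subrel ((· < ·) : Ordinal.{0} → Ordinal.{0} → Prop) (· ∈ s))

/-- `D^c_{≤ i}(β) = {α < β | c(α, β) ≤ i}`. -/
def DleI (c : Ordinal.{0} → Ordinal.{0} → Ordinal.{0}) (i β : Ordinal.{0}) :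
    Set Ordinal.{0} :=
  {α | α < β ∧ c α β ≤ i}

/-- The coloring `c` takes pairs from `κ` to colors `< θ`. -/
def ColoringInto (κ θ : Ordinal.{0}) (c : Ordinal.{0} → Ordinal.{0} → Ordinal.{0}) : Prop :=
  ∀ α β, α < β → β < κ → c α β < θ

/-- `S`-closedness of a coloring. -/
def IsClosedColoringOn (S : Set Ordinal.{0}) (κ θ : Ordinal.{0})
    (c : Ordinal.{0} → Ordinal.{0} → Ordinal.{0}) : Prop :=
  ∀ β < κ, ∀ i < θ, ∀ α ∈ S, α < β → 0 < α →
    sSup (DleI c i β ∩ Iio α) = α → α ∈ DleI c i β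

/-- Closedness of a coloring. -/
def IsClosedColoring (κ θ : Ordinal.{0})
    (c : Ordinal.{0} → Ordinal.{0} → Ordinal.{0}) : Prop :=
  ∀ β < κ, ∀ i < θ, ∀ α, α < β → 0 < α →
    sSup (DleI c i β ∩ Iio α) = α → α ∈ DleI c i β

/-- `c` witnesses `U(κ, μ, θ, χ)`. -/
def WitnessU (κ μ θ χ : Cardinal.{0})
    (c : Ordinal.{0} → Ordinal.{0} → Ordinal.{0}) : Prop :=
  ∀ χ' : Cardinal.{0}, χ' < χ →
    ∀ 𝒜 : Set (Set Ordinal.{0}),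
      (∀ a ∈ 𝒜, a ⊆ Iio κ.ord ∧ MkEq a χ') → MkEq 𝒜 κ → 𝒜.Pairwise Disjoint →
    ∀ i, i < θ.ord →
      ∃ ℬ ⊆ 𝒜, MkEq ℬ μ ∧
        ∀ a ∈ ℬ, ∀ b ∈ ℬ, (∀ α ∈ a, ∀ β ∈ b, α < β) →
          ∀ α ∈ a, ∀ β ∈ b, i < c α β

/-- An ultrafilter over a set `X` of ordinals, presented as a family of subsets of `X`. -/
structure IsUltrafilterOn (X : Set Ordinal.{0}) (U : Set (Set Ordinal.{0})) : Prop where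
  mem_subset : ∀ A ∈ U, A ⊆ X
  univ_mem : X ∈ U
  empty_notMem : ∅ ∉ U
  mem_of_superset : ∀ A ∈ U, ∀ B, B ⊆ X → A ⊆ B → B ∈ U
  inter_mem : ∀ A ∈ U, ∀ B ∈ U, A ∩ B ∈ U
  mem_or_compl_mem : ∀ A, A ⊆ X → A ∈ U ∨ X \ A ∈ U

/-- `δ`-completeness of an ultrafilter over `X`. -/
def IsComplete (δ : Cardinal.{0}) (X : Set Ordinal.{0})
    (U : Set (Set Ordinal.{0})) : Prop :=
  ∀ s : Set (Set Ordinal.{0}), s ⊆ U → MkLt s δ → X ∩ ⋂₀ s ∈ U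

/-- Uniformity of an ultrafilter over `X`: all members have full cardinality. -/
def IsUniform (X : Set Ordinal.{0}) (U : Set (Set Ordinal.{0})) : Prop :=
  ∀ A ∈ U, Cardinal.mk A = Cardinal.mk X

/-- Weak normality of an ultrafilter over a set of nonzero ordinals below `κ`. -/
def IsWeaklyNormal (κ : Ordinal.{0}) (X : Set Ordinal.{0})
    (U : Set (Set Ordinal.{0})) : Prop :=
  ∀ X' ∈ U, ∀ g : Ordinal.{0} → Ordinal.{0}, (∀ β ∈ X', g β < β) →
    ∃ γ < κ, {β ∈ X' | g β < γ} ∈ U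

/-- A `□(κ,<ω)`-sequence. -/
def IsSquareSeqLtOmega (κ : Ordinal.{0})
    (𝒞 : Ordinal.{0} → Set (Set Ordinal.{0})) : Prop :=
  (∀ α, α < κ → Order.IsSuccLimit α →
      (𝒞 α).Finite ∧ (𝒞 α).Nonempty ∧ ∀ C ∈ 𝒞 α, IsClubIn C α) ∧
  (∀ α, α < κ → Order.IsSuccLimit α → ∀ C ∈ 𝒞 α, ∀ β ∈ acc C, C ∩ Iio β ∈ 𝒞 β) ∧
  ¬ ∃ D : Set Ordinal.{0}, IsClubIn D κ ∧ ∀ α ∈ acc D, D ∩ Iio α ∈ 𝒞 α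

/-- A weakly inaccessible cardinal: a regular limit cardinal. -/
def IsWInaccessible (c : Cardinal.{0}) : Prop :=
  c.IsRegular ∧ Order.IsSuccLimit c

/-- The Mahlo hierarchy (finite levels): `0`-Mahlo means weakly inaccessible, and
`(n+1)`-Mahlo means regular with stationarily many `n`-Mahlo cardinals below. -/
def IsNMahlo : ℕ → Cardinal.{0} → Prop
  | 0 => fun c => IsWInaccessible c
  | (n + 1) => fun c => c.IsRegular ∧
      IsStationaryIn {α : Ordinal.{0} | ∃ μ : Cardinal.{0}, μ.ord = α ∧ IsNMahlo n μ} c.ord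

/-- A set of ordinals is bounded below `α`. -/
def BoundedIn (s : Set Ordinal.{0}) (α : Ordinal.{0}) : Prop :=
  s = ∅ ∨ ∃ ε < α, ∀ η ∈ s, η ≤ ε

/-- The covering property for a coloring `c : [κ]² → θ`. -/
def HasCoveringProperty (κ θ : Cardinal.{0})
    (c : Ordinal.{0} → Ordinal.{0} → Ordinal.{0}) : Prop :=
  ∀ α < κ.ord, ∃ f : Ordinal.{0} → Ordinal.{0},
    Set.InjOn f (Iio θ.ord) ∧
    (∀ i < θ.ord, α < f i ∧ f i < κ.ord ∧ Order.IsSuccLimit (f i) ∧ (f i).cof ≠ θ) ∧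
    BoundedIn (Iio α \ ⋃ i ∈ Iio θ.ord, DleI c i (f i)) α


/-!
For every `A < λ⁺` fix an injection `e_A : A → λ`. The C-sequence attaches to `β = λ·A + r`
(`r < λ`), besides a fundamental sequence of `β`, the piece `{x < A | e_A x < r}` of `A`, and
then closes up. Every proper initial segment of every club so obtained has size `< λ`, and
letting `r` run through a cofinal subset of `λ` of size `cf λ` covers each `α < λ⁺` by `cf λ`
of the clubs, so `χ ≤ cf λ`.

Conversely, suppose `Δ` of size `λ⁺` is covered below each `α` by `χ < cf λ` clubs. Cut an
initial part of `Δ` into `χ⁺` consecutive blocks of size `λ` and take `α` above them. By the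
pigeonhole principle each block meets one of the `χ` clubs chosen at `α` in `λ` points, and no
club can do this for two blocks, since its initial segment below a point of the later block
would contain `λ` points of the earlier one. Hence `χ⁺ ≤ χ`, a contradiction.
-/

section Closure

open Cardinal

def limClosure (S : Set Ordinal.{0}) : Set Ordinal.{0} :=
  S ∪ {δ | 0 < δ ∧ sSup (S ∩ Iio δ) = δ}

theorem subset_limClosure (S : Set Ordinal.{0}) : S ⊆ limClosure S := subset_union_left

theorem limClosure_inter_Iio_subset (S : Set Ordinal.{0}) (δ : Ordinal.{0}) :
    limClosure S ∩ Iio δ ⊆ limClosure (S ∩ Iio δ) := by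
  rintro x ⟨hx | ⟨hx0, hxS⟩, hxδ⟩
  · exact Or.inl ⟨hx, hxδ⟩
  · refine Or.inr ⟨hx0, ?_⟩
    rwa [inter_assoc, Iio_inter_Iio, inf_of_le_right (le_of_lt hxδ)]

theorem isClosedIn_limClosure_inter_Iio (S : Set Ordinal.{0}) (β : Ordinal.{0}) :
    IsClosedIn (limClosure S ∩ Iio β) β := by
  intro α hαβ hα0 hsup
  have hbdd : BddAbove (S ∩ Iio α) := ⟨α, fun x hx => le_of_lt hx.2⟩
  refine ⟨Or.inr ⟨hα0, le_antisymm (csSup_le' fun x hx => le_of_lt hx.2) ?_⟩, hαβ⟩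
  conv_lhs => rw [← hsup]
  refine csSup_le' ?_
  rintro y ⟨⟨hyS | ⟨-, hy⟩, -⟩, hyα⟩
  · exact le_csSup hbdd ⟨hyS, hyα⟩
  · rw [← hy]
    exact csSup_le_csSup' hbdd (inter_subset_inter_right _ (Iio_subset_Iio (le_of_lt hyα)))

/-- A limit point `δ` of `S` with points of `S` above it is `sSup (S ∩ Iio x)` for
`x = min (S ∩ Ici δ)`. -/
theorem limClosure_subset (S : Set Ordinal.{0}) :
    limClosure S ⊆ S ∪ insert (sSup S) ((fun x => sSup (S ∩ Iio x)) '' S) := by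
  rintro δ (hδ | ⟨-, hδ⟩)
  · exact Or.inl hδ
  right
  rcases (S ∩ Ici δ).eq_empty_or_nonempty with hempty | hne
  · have hS : S ∩ Iio δ = S := by
      refine inter_eq_left.2 fun x hx => mem_Iio.2 (not_le.1 fun hδx => ?_)
      exact hempty.subset ⟨hx, hδx⟩
    exact Or.inl (by rw [← hδ, hS])
  · obtain ⟨hxS, hδx⟩ := csInf_mem hne
    refine Or.inr ⟨_, hxS, ?_⟩
    have hsame : S ∩ Iio (sInf (S ∩ Ici δ)) = S ∩ Iio δ := by
      ext y
      refine ⟨fun ⟨hy, hyx⟩ => ⟨hy, mem_Iio.2 (not_le.1 fun hδy => ?_)⟩,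
        fun ⟨hy, hyδ⟩ => ⟨hy, mem_Iio.2 (lt_of_lt_of_le hyδ hδx)⟩⟩
      exact not_le.2 hyx
        (csInf_le (OrderBot.bddBelow _) (show y ∈ S ∩ Ici δ from ⟨hy, hδy⟩))
    simp only [hsame, hδ]

theorem mk_limClosure_lt {S : Set Ordinal.{0}} {c : Cardinal.{1}} (hc : ℵ₀ ≤ c)
    (hS : #S < c) : #(limClosure S) < c :=
  calc #(limClosure S)
      ≤ #(S ∪ insert (sSup S) ((fun x => sSup (S ∩ Iio x)) '' S) : Set Ordinal.{0}) :=
        mk_le_mk_of_subset (limClosure_subset S)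
    _ ≤ #S + (#S + 1) := (mk_union_le _ _).trans <|
        add_le_add le_rfl (mk_insert_le.trans (add_le_add mk_image_le le_rfl))
    _ < c := add_lt_of_lt hc hS (add_lt_of_lt hc hS (one_lt_aleph0.trans_le hc))

end Closure

section Enumerations

open Cardinal

theorem exists_cofinal_subset_mk_inter_Iio_lt_cof (β : Ordinal.{0}) :
    ∃ F ⊆ Iio β, #F = lift.{1} β.cof ∧ (∀ ξ < β, ∃ y ∈ F, ξ ≤ y) ∧
      ∀ x < β, #↥(F ∩ Iio x) < lift.{1} β.cof := by
  obtain ⟨f, hf⟩ := Ordinal.exists_isFundamentalSeq (o := β) rfl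
  set g : Iio β.cof.ord → Ordinal.{0} := fun i => (f i).1
  have hg : StrictMono g := fun _ _ h => hf.strictMono h
  refine ⟨range g, range_subset_iff.2 fun i => (f i).2, ?_, fun ξ hξ => ?_, fun x hx => ?_⟩
  · rw [mk_range_eq _ hg.injective, mk_Iio_ordinal, card_ord]
  · obtain ⟨_, ⟨i, rfl⟩, hi⟩ := hf.isCofinal_range ⟨ξ, hξ⟩
    exact ⟨g i, mem_range_self i, hi⟩
  · obtain ⟨_, ⟨i, rfl⟩, hi⟩ := hf.isCofinal_range ⟨x, hx⟩
    have hsub : range g ∩ Iio x ⊆ g '' Iio i := by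
      rintro _ ⟨⟨j, rfl⟩, hj⟩
      exact ⟨j, hg.lt_iff_lt.1 (lt_of_lt_of_le hj hi), rfl⟩
    have hval : Subtype.val '' Iio i ⊆ Iio i.1 := by
      rintro _ ⟨j, hj, rfl⟩
      exact hj
    calc #↥(range g ∩ Iio x) ≤ #(Iio i) := (mk_le_mk_of_subset hsub).trans mk_image_le
      _ = #(Subtype.val '' Iio i) := (mk_image_eq Subtype.val_injective).symm
      _ ≤ #(Iio i.1) := mk_le_mk_of_subset hval
      _ < lift.{1} β.cof := by
        rw [mk_Iio_ordinal, lift_lt]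
        exact lt_ord.1 i.2

theorem exists_injOn_mapsTo_Iio_ord (lam : Cardinal.{0}) :
    ∃ e : Ordinal.{0} → Ordinal.{0} → Ordinal.{0}, ∀ A < (Order.succ lam).ord,
      InjOn (e A) (Iio A) ∧ MapsTo (e A) (Iio A) (Iio lam.ord) := by
  have h : ∀ A : Ordinal.{0}, ∃ g : Ordinal.{0} → Ordinal.{0}, A < (Order.succ lam).ord →
      InjOn g (Iio A) ∧ MapsTo g (Iio A) (Iio lam.ord) := by
    intro A
    by_cases hA : A < (Order.succ lam).ord
    · have hmk : #(Iio A) ≤ #(Iio lam.ord) := by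
        rw [mk_Iio_ordinal, mk_Iio_ordinal, lift_le, card_ord]
        exact Order.lt_succ_iff.1 (lt_ord.1 hA)
      obtain ⟨emb⟩ := hmk
      refine ⟨fun x => if hx : x < A then (emb ⟨x, hx⟩).1 else 0, fun _ => ⟨?_, ?_⟩⟩
      · intro x hx y hy hxy
        simp only [dif_pos (mem_Iio.1 hx), dif_pos (mem_Iio.1 hy)] at hxy
        exact congrArg Subtype.val (emb.injective (Subtype.ext hxy))
      · intro x hx
        simp only [dif_pos (mem_Iio.1 hx)]
        exact (emb _).2
    · exact ⟨id, fun h => absurd h hA⟩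
  choose e he using h
  exact ⟨e, he⟩

theorem exists_strictMono_mem {Δ : Set Ordinal.{0}} {κ : Cardinal.{0}} (hΔ : Δ ⊆ Iio κ.ord)
    (hκ : lift.{1} κ ≤ #Δ) :
    ∃ E : Ordinal.{0} → Ordinal.{0}, StrictMono E ∧ ∀ o < κ.ord, E o ∈ Δ := by
  have hs : ¬ BddAbove (Δ ∪ Ici κ.ord) := by
    rintro ⟨b, hb⟩
    have := hb (Or.inr (le_max_left κ.ord (b + 1)))
    exact (lt_add_one b).not_ge ((le_max_right _ _).trans this)
  refine ⟨Ordinal.enumOrd _, Ordinal.enumOrd_strictMono hs, fun o ho => ?_⟩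
  refine (Ordinal.enumOrd_mem hs o).resolve_right fun hκo => ?_
  have hsub : Δ ⊆ Ordinal.enumOrd (Δ ∪ Ici κ.ord) '' Iio o := by
    intro x hx
    obtain ⟨o', rfl⟩ : x ∈ range (Ordinal.enumOrd (Δ ∪ Ici κ.ord)) := by
      rw [Ordinal.range_enumOrd hs]
      exact Or.inl hx
    exact ⟨o', (Ordinal.enumOrd_strictMono hs).lt_iff_lt.1 (lt_of_lt_of_le (hΔ hx) hκo), rfl⟩
  have : lift.{1} κ < lift.{1} κ :=
    calc lift.{1} κ ≤ #(Iio o) := hκ.trans ((mk_le_mk_of_subset hsub).trans mk_image_le)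
      _ < lift.{1} κ := by
        rw [mk_Iio_ordinal, lift_lt]
        exact lt_ord.1 ho
  exact this.false

end Enumerations

section Construction

open Cardinal

theorem _root_.Ordinal.div_le_self (a b : Ordinal) : a / b ≤ a := by
  rcases eq_or_ne b 0 with rfl | hb
  · rw [Ordinal.div_zero]
    exact zero_le
  · exact Ordinal.div_le_of_le_mul (Ordinal.le_mul_right a (pos_iff_ne_zero.2 hb))

variable (lam : Cardinal.{0}) (F : Ordinal.{0} → Set Ordinal.{0})
  (e : Ordinal.{0} → Ordinal.{0} → Ordinal.{0})

/-- Writing `β = lam.ord * A + r` with `r < lam.ord`, the ordinal `β` codes the piece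
`{x < A | e A x < r}` of `A`. -/
def decodeSet (β : Ordinal.{0}) : Set Ordinal.{0} :=
  {x | x < β / lam.ord ∧ e (β / lam.ord) x < β % lam.ord}

def cseq (β : Ordinal.{0}) : Set Ordinal.{0} :=
  limClosure (F β ∪ decodeSet lam e β) ∩ Iio β

variable {lam F e}

theorem mem_decodeSet_mul_add {A r x : Ordinal.{0}} (hr : r < lam.ord) :
    x ∈ decodeSet lam e (lam.ord * A + r) ↔ x < A ∧ e A x < r := by
  have hL : lam.ord ≠ 0 := (lt_of_le_of_lt zero_le hr).ne'
  show _ ∧ _ ↔ _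
  rw [Ordinal.mul_add_div _ hL, Ordinal.div_eq_zero_of_lt hr, add_zero,
    Ordinal.mul_add_mod_self, Ordinal.mod_eq_of_lt hr]

theorem mk_decodeSet_lt (hlam : lam ≠ 0) {β : Ordinal.{0}}
    (he : InjOn (e (β / lam.ord)) (Iio (β / lam.ord))) :
    #(decodeSet lam e β) < lift.{1} lam := by
  have hsub : e (β / lam.ord) '' decodeSet lam e β ⊆ Iio (β % lam.ord) := by
    rintro _ ⟨x, hx, rfl⟩
    exact hx.2
  calc #(decodeSet lam e β)
      = #(e (β / lam.ord) '' decodeSet lam e β) :=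
        (mk_image_eq_of_injOn _ _ (he.mono fun x hx => hx.1)).symm
    _ ≤ #(Iio (β % lam.ord)) := mk_le_mk_of_subset hsub
    _ < lift.{1} lam := by
      rw [mk_Iio_ordinal, lift_lt]
      exact lt_ord.1 (Ordinal.mod_lt β (ord_eq_zero.not.2 hlam))

theorem isCSeq_cseq (hFsub : ∀ β, F β ⊆ Iio β) (hFcof : ∀ β, ∀ ξ < β, ∃ y ∈ F β, ξ ≤ y)
    (κ : Ordinal.{0}) : IsCSeq κ (cseq lam F e) := by
  intro β _
  refine ⟨inter_subset_right, isClosedIn_limClosure_inter_Iio _ β,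
    csSup_eq_csSup_of_forall_exists_le (fun x hx => ⟨x, hx.2, le_rfl⟩) fun ξ hξ => ?_⟩
  obtain ⟨y, hy, hξy⟩ := hFcof β ξ hξ
  exact ⟨y, ⟨subset_limClosure _ (Or.inl hy), hFsub β hy⟩, hξy⟩

theorem mk_cseq_inter_Iio_lt (hlam : ℵ₀ ≤ lam)
    (hFthin : ∀ β, ∀ x < β, #↥(F β ∩ Iio x) < lift.{1} β.cof)
    (he : ∀ A < (Order.succ lam).ord, InjOn (e A) (Iio A)) {β : Ordinal.{0}}
    (hβ : β < (Order.succ lam).ord) {x : Ordinal.{0}} (hx : x ∈ cseq lam F e β) :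
    #↥(cseq lam F e β ∩ Iio x) < lift.{1} lam := by
  have hc : ℵ₀ ≤ lift.{1} lam := by simpa using hlam
  have hcof : lift.{1} β.cof ≤ lift.{1} lam :=
    lift_le.2 ((Ordinal.cof_le_card β).trans (Order.lt_succ_iff.1 (lt_ord.1 hβ)))
  have hsub : cseq lam F e β ∩ Iio x ⊆ limClosure ((F β ∪ decodeSet lam e β) ∩ Iio x) :=
    fun y hy => limClosure_inter_Iio_subset _ x ⟨hy.1.1, hy.2⟩
  have hgen : (F β ∪ decodeSet lam e β) ∩ Iio x ⊆ (F β ∩ Iio x) ∪ decodeSet lam e β :=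
    fun y ⟨hy, hyx⟩ => hy.imp (fun hF => ⟨hF, hyx⟩) id
  have hF : #↥(F β ∩ Iio x) < lift.{1} lam := (hFthin β x hx.2).trans_le hcof
  have hD : #(decodeSet lam e β) < lift.{1} lam :=
    mk_decodeSet_lt (aleph0_pos.trans_le hlam).ne'
      (he _ (lt_of_le_of_lt (Ordinal.div_le_self β _) hβ))
  exact (mk_le_mk_of_subset hsub).trans_lt <| mk_limClosure_lt hc <|
    (mk_le_mk_of_subset hgen).trans_lt <| (mk_union_le _ _).trans_lt (add_lt_of_lt hc hF hD)

theorem cSeqCovers_cseq (hlam : ℵ₀ ≤ lam)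
    (he : ∀ A < (Order.succ lam).ord, MapsTo (e A) (Iio A) (Iio lam.ord)) :
    CSeqCovers (Order.succ lam) (Iio (Order.succ lam).ord) (cseq lam F e) lam.ord.cof := by
  obtain ⟨Y, hYsub, hYcard, hYcof, -⟩ := exists_cofinal_subset_mk_inter_Iio_lt_cof lam.ord
  have hκ : ℵ₀ ≤ Order.succ lam := hlam.trans (Order.le_succ lam)
  have hLκ : lam.ord < (Order.succ lam).ord := ord_lt_ord.2 (Order.lt_succ lam)
  refine ⟨Iio (Order.succ lam).ord, fun α => (lam.ord * α + ·) '' Y, subset_rfl, ?_,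
    fun α hα => ⟨?_, ?_⟩, fun α hα x hx => ?_⟩
  · rw [MkEq, mk_Iio_ordinal, card_ord]
  · rintro _ ⟨y, hy, rfl⟩
    exact Ordinal.isPrincipal_add_ord hκ (Ordinal.isPrincipal_mul_ord hκ hLκ hα)
      ((hYsub hy).trans hLκ)
  · rw [MkEq, mk_image_eq (add_right_injective _), hYcard]
  · obtain ⟨y, hy, hxy⟩ :=
      hYcof _ ((isSuccLimit_ord hlam).succ_lt (he α hα hx.2))
    have hαy : α ≤ lam.ord * α + y :=
      (Ordinal.le_mul_right α (ord_pos.2 (aleph0_pos.trans_le hlam))).trans le_self_add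
    refine mem_iUnion₂.2 ⟨lam.ord * α + y, ⟨y, hy, rfl⟩,
      subset_limClosure _ (Or.inr ((mem_decodeSet_mul_add (hYsub hy)).2 ⟨hx.2, ?_⟩)),
      lt_of_lt_of_le hx.2 hαy⟩
    exact Order.succ_le_iff.1 hxy

end Construction

section LowerBound

universe u

open Cardinal

theorem exists_le_mk_inter_of_subset_biUnion {α ι : Type u} {D : Set α} {B : Set ι}
    {S : ι → Set α} {c : Cardinal} (hc : ℵ₀ ≤ c) (hD : c ≤ #D) (hB : #B < c.ord.cof)
    (hcover : D ⊆ ⋃ i ∈ B, S i) : ∃ i ∈ B, c ≤ #↥(S i ∩ D) := by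
  have h : ∀ d : D, ∃ i : B, (d : α) ∈ S i := fun d => by
    obtain ⟨i, hi, hd⟩ := mem_iUnion₂.1 (hcover d.2)
    exact ⟨⟨i, hi⟩, hd⟩
  choose f hf using h
  obtain ⟨i, hi⟩ := infinite_pigeonhole_card f c hD hc hB
  have hsub : Subtype.val '' (f ⁻¹' {i}) ⊆ S i ∩ D := by
    rintro _ ⟨d, hd, rfl⟩
    exact ⟨(mem_singleton_iff.1 hd) ▸ hf d, d.2⟩
  refine ⟨i, i.2, hi.trans ?_⟩
  rw [← mk_image_eq Subtype.val_injective]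
  exact mk_le_mk_of_subset hsub

theorem exists_ordered_blocks {lam : Cardinal.{0}} (hlam : ℵ₀ ≤ lam) {Δ : Set Ordinal.{0}}
    (hΔ : Δ ⊆ Iio (Order.succ lam).ord) (hΔmk : lift.{1} (Order.succ lam) ≤ #Δ)
    {ν : Ordinal.{0}} (hν : ν ≤ lam.ord) :
    ∃ α < (Order.succ lam).ord, ∃ D : Ordinal.{0} → Set Ordinal.{0},
      (∀ j < ν, D j ⊆ Δ ∩ Iio α ∧ #(D j) = lift.{1} lam) ∧
      ∀ j j', j < j' → ∀ x ∈ D j, ∀ y ∈ D j', x < y := by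
  obtain ⟨E, hE, hEΔ⟩ := exists_strictMono_mem hΔ hΔmk
  set L := lam.ord
  have hκ : ℵ₀ ≤ Order.succ lam := hlam.trans (Order.le_succ lam)
  have hLκ : L < (Order.succ lam).ord := ord_lt_ord.2 (Order.lt_succ lam)
  have hLν : L * ν < (Order.succ lam).ord :=
    Ordinal.isPrincipal_mul_ord hκ hLκ (lt_of_le_of_lt hν hLκ)
  have hLj : ∀ j η, η < L → L * j + η < L * (j + 1) := fun j η hη => by
    rw [mul_add_one]
    exact (add_lt_add_iff_left _).2 hη
  refine ⟨E (L * ν), hΔ (hEΔ _ hLν), fun j => (fun η => E (L * j + η)) '' Iio L,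
    fun j hj => ⟨?_, ?_⟩, ?_⟩
  · rintro _ ⟨η, hη, rfl⟩
    have : L * j + η < L * ν :=
      (hLj j η hη).trans_le (mul_le_mul_right (Order.succ_le_of_lt hj) _)
    exact ⟨hEΔ _ (this.trans hLν), hE this⟩
  · rw [mk_image_eq_of_injOn _ _ fun _ _ _ _ h => add_left_cancel (hE.injective h),
      mk_Iio_ordinal, card_ord]
  · rintro j j' hjj' _ ⟨η, hη, rfl⟩ _ ⟨η', -, rfl⟩
    exact hE ((hLj j η hη).trans_le
      ((mul_le_mul_right (Order.succ_le_of_lt hjj') _).trans le_self_add))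

theorem cof_ord_le_of_cSeqCovers {lam χ : Cardinal.{0}} (hlam : ℵ₀ ≤ lam)
    {Γ : Set Ordinal.{0}} {C : Ordinal.{0} → Set Ordinal.{0}}
    (hthin : ∀ β ∈ Γ, ∀ x ∈ C β, #↥(C β ∩ Iio x) < lift.{1} lam)
    (hcov : CSeqCovers (Order.succ lam) Γ C χ) : lam.ord.cof ≤ χ := by
  by_contra! hχ
  obtain ⟨Δ, b, hΔ, hΔmk, hb, hcover⟩ := hcov
  set ν := (Order.succ χ).ord
  obtain ⟨α, hα, D, hD, hDlt⟩ := exists_ordered_blocks hlam hΔ hΔmk.ge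
    (ord_le_ord.2 ((Order.succ_le_of_lt hχ).trans (Ordinal.cof_ord_le lam)))
  have hpig : ∀ j < ν, ∃ β ∈ b α, lift.{1} lam ≤ #↥(C β ∩ D j) := fun j hj => by
    refine exists_le_mk_inter_of_subset_biUnion (by simpa using hlam) (hD j hj).2.ge ?_
      ((hD j hj).1.trans (hcover α hα))
    rw [(hb α hα).2, ← lift_ord, ← Ordinal.lift_cof, lift_lt]
    exact hχ
  choose! g hgb hgD using hpig
  -- a set meeting a later block in `λ` points would have a thick initial segment
  have hg : InjOn g (Iio ν) := by
    intro j hj j' hj' hjj'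
    by_contra hne
    wlog hlt : j < j' generalizing j j'
    · exact this hj' hj hjj'.symm (Ne.symm hne) (lt_of_le_of_ne (not_lt.1 hlt) (Ne.symm hne))
    obtain ⟨y, hyC, hyD⟩ : (C (g j') ∩ D j').Nonempty := by
      refine nonempty_iff_ne_empty.2 fun h => ?_
      have := hgD j' hj'
      rw [h, mk_eq_zero, nonpos_iff_eq_zero, lift_eq_zero] at this
      exact (aleph0_pos.trans_le hlam).ne' this
    have hsub : C (g j) ∩ D j ⊆ C (g j') ∩ Iio y :=
      fun x hx => ⟨hjj' ▸ hx.1, hDlt j j' hlt x hx.2 y hyD⟩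
    exact ((hgD j hj).trans (mk_le_mk_of_subset hsub)).not_gt
      (hthin _ ((hb α hα).1 (hgb j' hj')) y hyC)
  have : lift.{1} (Order.succ χ) ≤ lift.{1} χ :=
    calc lift.{1} (Order.succ χ) = #(Iio ν) := by rw [mk_Iio_ordinal, card_ord]
      _ = #(g '' Iio ν) := (mk_image_eq_of_injOn _ _ hg).symm
      _ ≤ #(b α) := mk_le_mk_of_subset fun _ ⟨j, hj, hgj⟩ => hgj ▸ hgb j hj
      _ = lift.{1} χ := (hb α hα).2
  exact (Order.lt_succ χ).not_ge (lift_le.1 this)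

end LowerBound

theorem statement12 (lam : Cardinal.{0}) (hlam : Cardinal.aleph0 ≤ lam) :
    (∃ C, IsCSeq (Order.succ lam).ord C ∧ chiOf (Order.succ lam) C = lam.ord.cof) ∧
    lam.ord.cof ∈ spec (Order.succ lam) := by
  choose F hF using exists_cofinal_subset_mk_inter_Iio_lt_cof
  obtain ⟨e, he⟩ := exists_injOn_mapsTo_Iio_ord lam
  have hC : IsCSeq (Order.succ lam).ord (cseq lam F e) :=
    isCSeq_cseq (fun β => (hF β).1) (fun β => (hF β).2.2.1) _
  have hcov := cSeqCovers_cseq (F := F) hlam fun A hA => (he A hA).2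
  have hle : lam.ord.cof ≤ Order.succ lam := (Ordinal.cof_ord_le lam).trans (Order.le_succ lam)
  have hχ : chiOf (Order.succ lam) (cseq lam F e) = lam.ord.cof :=
    le_antisymm (csInf_le' ⟨hle, hcov⟩) <| le_csInf ⟨_, hle, hcov⟩ fun χ hχ =>
      cof_ord_le_of_cSeqCovers hlam (fun β hβ _ hx => mk_cseq_inter_Iio_lt hlam
        (fun β => (hF β).2.2.2) (fun A hA => (he A hA).1) hβ hx) hχ.2
  exact ⟨⟨_, hC, hχ⟩, Ordinal.aleph0_le_cof_iff.2 (Ordinal.one_lt_cof_iff.2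
    (Cardinal.isSuccLimit_ord hlam)), _, hC, hχ⟩

end CSeq
end
end

section
/- Let κ be a regular uncountable cardinal and suppose ω ≤ χ ≤ θ, where θ is regular and θ < κ. If there exists a stationary Σ ⊆ E^κ_{≥χ} and a Σ-closed coloring c : [κ]² → θ witnessing U(κ, 2, θ, χ), then χ(κ) ≥ χ. -/
noncomputable section

open Set

namespace CSeq

/-!
Let `C_β` be the closure of the "stair" of `β`: the points of `D^c_{≤i}(β)` above
`sup D^c_{<i}(β)`, over all `i < θ`. If `C_β` is unbounded in some `δ ∈ Σ` below `β`, the stair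
below `δ` lies inside `D^c_{≤i}(β)` for the least `i` with `D^c_{≤i}(β)` unbounded in `δ`, so
`Σ`-closedness gives `c(δ, β) ≤ i`.

Suppose `Δ` and `b` witness `χ(⟨C_β⟩) < χ`. For stationarily many `δ ∈ Σ` the set `Δ` is
unbounded in `δ`, and Fodor's lemma bounds `b(δ) ∩ δ` uniformly on an unbounded set of them. Choose
`κ` many such points `δ_k`, each above the earlier ones, and surround each by a block `a_k` of
size `|b(δ_k)| + 1` containing `δ_k` and `b(δ_k) \ δ_k`. For `j < k`, as `|b(δ_k)| < cf(δ_j)`,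
some `β ∈ b(δ_k)` has `C_β` unbounded in `δ_j`, and `β ≥ δ_k`; so `c(δ_j, β)` is bounded by a color
depending only on `k`, which by pigeonhole is some fixed `i < θ` for `κ` many `k`. No two of
these blocks are then `i`-separated, against `U(κ, 2, θ, χ)`.
-/

open Cardinal

def IsUnboundedIn (X : Set Ordinal.{0}) (κ : Ordinal.{0}) : Prop :=
  ∀ z < κ, ∃ x ∈ X, z < x

theorem IsUnboundedIn.mono {X Y : Set Ordinal.{0}} {κ : Ordinal.{0}} (h : IsUnboundedIn X κ)
    (hXY : X ⊆ Y) : IsUnboundedIn Y κ :=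
  fun z hz => (h z hz).imp fun _ hx => ⟨hXY hx.1, hx.2⟩

theorem IsUnboundedIn.inter_Ioi {X : Set Ordinal.{0}} {κ ε : Ordinal.{0}}
    (h : IsUnboundedIn X κ) (hε : ε < κ) : IsUnboundedIn (X ∩ Ioi ε) κ := fun z hz =>
  let ⟨x, hx, hzx⟩ := h (max z ε) (max_lt hz hε)
  ⟨x, ⟨hx, (le_max_right z ε).trans_lt hzx⟩, (le_max_left z ε).trans_lt hzx⟩

theorem isUnboundedIn_iff_sSup_eq {X : Set Ordinal.{0}} {δ : Ordinal.{0}} (hX : X ⊆ Iio δ) :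
    IsUnboundedIn X δ ↔ sSup X = δ := by
  refine ⟨fun h => le_antisymm (csSup_le' fun x hx => (hX hx).le) (le_of_forall_lt fun z hz => ?_),
    fun h z hz => exists_lt_of_lt_csSup' (h ▸ hz)⟩
  obtain ⟨x, hx, hzx⟩ := h z hz
  exact lt_csSup_of_lt (bddAbove_Iio.mono hX) hx hzx

theorem sSup_lt_of_mk_lt_cof {s : Set Ordinal.{0}} {o : Ordinal.{0}} (hs : s ⊆ Iio o)
    (h : #s < lift.{1} o.cof) : sSup s < o :=
  Ordinal.sSup_lt_of_lt_cof (by rwa [Ordinal.lift_cof] at h) hs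

theorem sSup_lt_ord_of_mk_lt {κ : Cardinal.{0}} (hκ : κ.IsRegular) {s : Set Ordinal.{0}}
    (hs : s ⊆ Iio κ.ord) (h : #s < lift.{1} κ) : sSup s < κ.ord :=
  sSup_lt_of_mk_lt_cof hs (by rwa [hκ.cof_ord])

theorem mk_image_Iio_lt {κ : Cardinal.{0}} {k : Ordinal.{0}} (hk : k < κ.ord)
    (f : Ordinal.{0} → Ordinal.{0}) : #(f '' Iio k) < lift.{1} κ :=
  mk_image_le.trans_lt (by rw [mk_Iio_ordinal]; exact lift_lt.2 (lt_ord.1 hk))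

theorem IsUnboundedIn.mk_eq {κ : Cardinal.{0}} (hκ : κ.IsRegular) {X : Set Ordinal.{0}}
    (hX : X ⊆ Iio κ.ord) (h : IsUnboundedIn X κ.ord) : #X = lift.{1} κ := by
  refine le_antisymm ?_ (not_lt.1 fun hlt => ?_)
  · simpa [mk_Iio_ordinal] using mk_le_mk_of_subset hX
  · obtain ⟨x, hx, hsx⟩ := h _ (sSup_lt_ord_of_mk_lt hκ hX hlt)
    exact hsx.not_ge (le_csSup (bddAbove_Iio.mono hX) hx)

theorem isUnboundedIn_of_mk_eq {κ : Cardinal.{0}} (hκ : ℵ₀ ≤ κ) {X : Set Ordinal.{0}}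
    (h : #X = lift.{1} κ) : IsUnboundedIn X κ.ord := by
  intro z hz
  by_contra! hX
  have hsub : X ⊆ Iio (Order.succ z) := fun x hx => Order.lt_succ_of_le (hX x hx)
  have := (mk_le_mk_of_subset hsub).trans_lt <| by
    rw [mk_Iio_ordinal]; exact lift_lt.2 (lt_ord.1 ((isSuccLimit_ord hκ).succ_lt hz))
  exact this.ne h

theorem exists_isUnboundedIn_le_of_lt {κ : Cardinal.{0}} (hκ : κ.IsRegular) {θ : Ordinal.{0}}
    (hθ : θ < κ.ord) {T : Ordinal.{0} → Ordinal.{0}} (hT : ∀ k < κ.ord, T k < θ) :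
    ∃ i < θ, IsUnboundedIn {k | k < κ.ord ∧ T k ≤ i} κ.ord := by
  by_contra! h
  choose! B hBκ hB using fun i hi => by simpa [IsUnboundedIn] using h i hi
  set k := sSup ((fun i => B i + 1) '' Iio θ)
  have hk : k < κ.ord := sSup_lt_ord_of_mk_lt hκ
    (by rintro _ ⟨i, hi, rfl⟩; exact (isSuccLimit_ord hκ.aleph0_le).add_one_lt (hBκ i hi))
    (mk_image_Iio_lt hθ _)
  have hBk : B (T k) + 1 ≤ k := le_csSup Ordinal.bddAbove_of_small ⟨T k, hT k hk, rfl⟩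
  exact (Order.lt_add_one_iff.2 (hB (T k) (hT k hk) k hk le_rfl)).not_ge hBk

def closurePoints (κ : Ordinal.{0}) (F : Ordinal.{0} → Ordinal.{0}) : Set Ordinal.{0} :=
  {γ | 0 < γ ∧ γ < κ ∧ ∀ ε < γ, F ε < γ}

theorem closurePoints_mono {κ : Ordinal.{0}} {F G : Ordinal.{0} → Ordinal.{0}}
    (h : ∀ ε, F ε ≤ G ε) : closurePoints κ G ⊆ closurePoints κ F :=
  fun _ ⟨h0, hκ, hG⟩ => ⟨h0, hκ, fun ε hε => (h ε).trans_lt (hG ε hε)⟩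

/-- A closure point above `z` is the limit of the iterates from `z + 1` of
`x ↦ sup_{ε < x} (F ε + 1)`. -/
theorem isClubIn_closurePoints {κ : Cardinal.{0}} (hκ : κ.IsRegular) (hκ₀ : ℵ₀ < κ)
    {F : Ordinal.{0} → Ordinal.{0}} (hF : ∀ ε < κ.ord, F ε < κ.ord) :
    IsClubIn (closurePoints κ.ord F) κ.ord := by
  have hlim := isSuccLimit_ord hκ.aleph0_le
  refine ⟨fun γ hγ => hγ.2.1, fun z hz => ?_, fun γ hγκ hγ0 hγ => ⟨hγ0, hγκ, fun ε hε => ?_⟩⟩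
  · set G : Ordinal.{0} → Ordinal.{0} := fun x => sSup ((fun ε => F ε + 1) '' Iio x)
    have hG : ∀ x < κ.ord, G x < κ.ord := fun x hx => sSup_lt_ord_of_mk_lt hκ
      (by rintro _ ⟨ε, hε, rfl⟩; exact hlim.add_one_lt (hF ε (hε.trans hx)))
      (mk_image_Iio_lt hx _)
    have hz1 : z + 1 ≤ Ordinal.nfp G (z + 1) := Ordinal.le_nfp G _
    refine ⟨Ordinal.nfp G (z + 1), ⟨(Order.lt_add_one_iff.2 zero_le).trans_le hz1,
      Ordinal.nfp_lt_ord (by rwa [hκ.cof_ord]) hG (hlim.add_one_lt hz), fun ε hε => ?_⟩,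
      le_self_add.trans hz1⟩
    obtain ⟨n, hn⟩ := Ordinal.lt_nfp_iff.1 hε
    calc F ε < F ε + 1 := Order.lt_add_one_iff.2 le_rfl
      _ ≤ G (G^[n] (z + 1)) := le_csSup Ordinal.bddAbove_of_small ⟨ε, hn, rfl⟩
      _ ≤ Ordinal.nfp G (z + 1) := by
        rw [← Function.iterate_succ_apply' G]; exact Ordinal.iterate_le_nfp G _ _
  · obtain ⟨γ', ⟨⟨-, -, hγ'F⟩, hγ'γ⟩, hεγ'⟩ := exists_lt_of_lt_csSup' (hγ ▸ hε)
    exact (hγ'F ε hεγ').trans hγ'γ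

def nextAbove (X : Set Ordinal.{0}) (ε : Ordinal.{0}) : Ordinal.{0} :=
  sInf {x ∈ X | ε < x}

theorem nextAbove_mem {X : Set Ordinal.{0}} {κ ε : Ordinal.{0}} (hX : IsUnboundedIn X κ)
    (hε : ε < κ) : nextAbove X ε ∈ X ∧ ε < nextAbove X ε :=
  csInf_mem (hX ε hε)

theorem isUnboundedIn_inter_Iio_of_mem_closurePoints {X : Set Ordinal.{0}} {κ γ : Ordinal.{0}}
    (hX : IsUnboundedIn X κ) (hγ : γ ∈ closurePoints κ (nextAbove X)) :
    IsUnboundedIn (X ∩ Iio γ) γ := fun z hz =>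
  have hz' := nextAbove_mem hX (hz.trans hγ.2.1)
  ⟨nextAbove X z, ⟨hz'.1, hγ.2.2 z hz⟩, hz'.2⟩

theorem IsClubIn.isUnboundedIn {C : Set Ordinal.{0}} {κ : Ordinal.{0}} (hC : IsClubIn C κ)
    (hκ : Order.IsSuccLimit κ) : IsUnboundedIn C κ := fun z hz =>
  let ⟨x, hx, hzx⟩ := hC.2.1 (z + 1) (hκ.add_one_lt hz)
  ⟨x, hx, Order.add_one_le_iff.1 hzx⟩

theorem IsClubIn.mem_of_mem_closurePoints {C : Set Ordinal.{0}} {κ γ : Ordinal.{0}}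
    (hC : IsClubIn C κ) (hκ : Order.IsSuccLimit κ) (hγ : γ ∈ closurePoints κ (nextAbove C)) :
    γ ∈ C :=
  hC.2.2 γ hγ.2.1 hγ.1 <| (isUnboundedIn_iff_sSup_eq inter_subset_right).1
    (isUnboundedIn_inter_Iio_of_mem_closurePoints (hC.isUnboundedIn hκ) hγ)

section Stationary

variable {κ : Cardinal.{0}} (hκ : κ.IsRegular) (hκ₀ : ℵ₀ < κ) {S : Set Ordinal.{0}}
include hκ hκ₀

theorem IsStationaryIn.inter_closurePoints (hS : IsStationaryIn S κ.ord)
    {F : Ordinal.{0} → Ordinal.{0}} (hF : ∀ ε < κ.ord, F ε < κ.ord) :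
    IsStationaryIn (S ∩ closurePoints κ.ord F) κ.ord := by
  intro C hC
  have hlim := isSuccLimit_ord hκ.aleph0_le
  have hG : ∀ ε < κ.ord, max (F ε) (nextAbove C ε) < κ.ord := fun ε hε =>
    max_lt (hF ε hε) (hC.1 (nextAbove_mem (hC.isUnboundedIn hlim) hε).1)
  obtain ⟨γ, hγS, hγ⟩ := hS _ (isClubIn_closurePoints hκ hκ₀ hG)
  exact ⟨γ, ⟨hγS, closurePoints_mono (fun _ => le_max_left _ _) hγ⟩,
    hC.mem_of_mem_closurePoints hlim (closurePoints_mono (fun _ => le_max_right _ _) hγ)⟩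

theorem IsStationaryIn.exists_isUnboundedIn_le (hS : IsStationaryIn S κ.ord)
    {g : Ordinal.{0} → Ordinal.{0}} (hg : ∀ δ ∈ S, g δ < δ) :
    ∃ ε < κ.ord, IsUnboundedIn {δ ∈ S | g δ ≤ ε} κ.ord := by
  by_contra! h
  choose! B hBκ hB using fun ε hε => by simpa [IsUnboundedIn] using h ε hε
  obtain ⟨δ, hδS, -, hδκ, hδB⟩ := hS _ (isClubIn_closurePoints hκ hκ₀ hBκ)
  exact (hδB _ (hg δ hδS)).not_ge (hB _ ((hg δ hδS).trans hδκ) δ hδS le_rfl)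

end Stationary

def DltI (c : Ordinal.{0} → Ordinal.{0} → Ordinal.{0}) (i β : Ordinal.{0}) : Set Ordinal.{0} :=
  {α | α < β ∧ c α β < i}

def stair (c : Ordinal.{0} → Ordinal.{0} → Ordinal.{0}) (θ β : Ordinal.{0}) : Set Ordinal.{0} :=
  {x | ∃ i < θ, x ∈ DleI c i β ∧ sSup (DltI c i β) ≤ x}

def reachIndex (c : Ordinal.{0} → Ordinal.{0} → Ordinal.{0}) (θ β t : Ordinal.{0}) :
    Ordinal.{0} :=
  sInf {i | i < θ ∧ t ≤ sSup (DleI c i β)}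

theorem le_sSup_DleI {c : Ordinal.{0} → Ordinal.{0} → Ordinal.{0}} {y β : Ordinal.{0}}
    (h : y < β) : y ≤ sSup (DleI c (c y β) β) :=
  le_csSup (bddAbove_Iio.mono fun _ hx => hx.1) ⟨h, le_rfl⟩

theorem stair_subset {c : Ordinal.{0} → Ordinal.{0} → Ordinal.{0}} {θ β : Ordinal.{0}} :
    stair c θ β ⊆ Iio β :=
  fun _ ⟨_, _, hx, _⟩ => hx.1

section Coloring

variable {κ θ : Ordinal.{0}} {c : Ordinal.{0} → Ordinal.{0} → Ordinal.{0}}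
  (hc : ColoringInto κ θ c)
include hc

theorem reachIndex_spec {β t : Ordinal.{0}} (ht : t < β) (hβ : β < κ) :
    reachIndex c θ β t < θ ∧ t ≤ sSup (DleI c (reachIndex c θ β t) β) :=
  csInf_mem (s := {i | i < θ ∧ t ≤ sSup (DleI c i β)})
    ⟨c t β, hc t β ht hβ, le_sSup_DleI ht⟩

theorem reachIndex_image_subset {s : Set Ordinal.{0}} {t : Ordinal.{0}} (hs : s ⊆ Iio κ)
    (hts : ∀ β ∈ s, t < β) : (fun β => reachIndex c θ β t) '' s ⊆ Iio θ := by
  rintro _ ⟨β, hβ, rfl⟩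
  exact (reachIndex_spec hc (hts β hβ) (hs hβ)).1

theorem reachIndex_mono {β t t' : Ordinal.{0}} (h : t ≤ t') (ht' : t' < β) (hβ : β < κ) :
    reachIndex c θ β t ≤ reachIndex c θ β t' :=
  csInf_le' ⟨(reachIndex_spec hc ht' hβ).1, h.trans (reachIndex_spec hc ht' hβ).2⟩

/-- Given `z < β`, the least color `i` whose `D^c_{≤i}(β)` goes beyond `z` has
`sup D^c_{<i}(β) ≤ z`, so its points above `z` lie on the stair. -/
theorem isUnboundedIn_stair {β : Ordinal.{0}} (hβ : Order.IsSuccLimit β) (hβκ : β < κ) :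
    IsUnboundedIn (stair c θ β) β := by
  intro z hz
  have hz1 : z + 1 < β := hβ.add_one_lt hz
  have hne : {i | i < θ ∧ z < sSup (DleI c i β)}.Nonempty :=
    ⟨c (z + 1) β, hc _ _ hz1 hβκ, (Order.lt_add_one_iff.2 le_rfl).trans_le (le_sSup_DleI hz1)⟩
  set i := sInf {i | i < θ ∧ z < sSup (DleI c i β)}
  obtain ⟨hiθ, hzi⟩ : i < θ ∧ z < sSup (DleI c i β) := csInf_mem hne
  obtain ⟨x, hx, hzx⟩ := exists_lt_of_lt_csSup' hzi
  have hlow : sSup (DltI c i β) ≤ z := csSup_le' fun y ⟨hyβ, hyi⟩ => by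
    have hy : ¬ (c y β < θ ∧ z < sSup (DleI c (c y β) β)) := fun hy =>
      (csInf_le' (s := {i | i < θ ∧ z < sSup (DleI c i β)}) hy).not_gt hyi
    push Not at hy
    exact (le_sSup_DleI hyβ).trans (hy (hc y β hyβ hβκ))
  exact ⟨x, ⟨i, hiθ, hx, hlow.trans hzx.le⟩, hzx⟩

/-- If the stair of `β` is unbounded in `δ ∈ Σ`, then it lies in `D^c_{≤i}(β)` for the color
`i` reaching `δ`, and `Σ`-closedness puts `δ` itself there. -/
theorem color_le_reachIndex {Sta : Set Ordinal.{0}} (hclosed : IsClosedColoringOn Sta κ θ c)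
    {β δ : Ordinal.{0}} (hβ : β < κ) (hδ : δ ∈ Sta) (h0 : 0 < δ) (hδβ : δ < β)
    (hstair : IsUnboundedIn (stair c θ β ∩ Iio δ) δ) : c δ β ≤ reachIndex c θ β δ := by
  obtain ⟨hiθ, hδi⟩ := reachIndex_spec hc hδβ hβ
  set i := reachIndex c θ β δ
  have hsub : stair c θ β ∩ Iio δ ⊆ DleI c i β ∩ Iio δ := by
    rintro x ⟨⟨j, -, hxj, hjx⟩, hxδ⟩
    refine ⟨⟨hxj.1, hxj.2.trans (not_lt.1 fun hij => (mem_Iio.1 hxδ).not_ge ?_)⟩, hxδ⟩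
    calc δ ≤ sSup (DleI c i β) := hδi
      _ ≤ sSup (DltI c j β) := csSup_le_csSup' (bddAbove_Iio.mono fun _ hy => hy.1)
          fun y hy => ⟨hy.1, hy.2.trans_lt hij⟩
      _ ≤ x := hjx
  exact (hclosed β hβ i hiθ δ hδ hδβ h0 <|
    (isUnboundedIn_iff_sSup_eq inter_subset_right).1 (hstair.mono hsub)).2

end Coloring

def closureIn (H : Set Ordinal.{0}) (β : Ordinal.{0}) : Set Ordinal.{0} :=
  H ∪ {α | α < β ∧ 0 < α ∧ sSup (H ∩ Iio α) = α}

theorem closureIn_subset {H : Set Ordinal.{0}} {β : Ordinal.{0}} (hH : H ⊆ Iio β) :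
    closureIn H β ⊆ Iio β :=
  union_subset hH fun _ hx => hx.1

theorem IsUnboundedIn.of_closureIn {H : Set Ordinal.{0}} {β α : Ordinal.{0}}
    (h : IsUnboundedIn (closureIn H β ∩ Iio α) α) : IsUnboundedIn (H ∩ Iio α) α := by
  intro z hz
  obtain ⟨x, ⟨hx | ⟨-, -, hxH⟩, hxα⟩, hzx⟩ := h z hz
  · exact ⟨x, ⟨hx, hxα⟩, hzx⟩
  · obtain ⟨y, ⟨hy, hyx⟩, hzy⟩ := exists_lt_of_lt_csSup' (hxH ▸ hzx)
    exact ⟨y, ⟨hy, mem_Iio.2 ((mem_Iio.1 hyx).trans hxα)⟩, hzy⟩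

theorem isClosedIn_closureIn {H : Set Ordinal.{0}} {β : Ordinal.{0}} :
    IsClosedIn (closureIn H β) β := fun _ hαβ h0 hα =>
  Or.inr ⟨hαβ, h0, (isUnboundedIn_iff_sSup_eq inter_subset_right).1
    ((isUnboundedIn_iff_sSup_eq inter_subset_right).2 hα).of_closureIn⟩

/-- The second set is `{γ}` at `β = γ + 1` and empty otherwise, so that successor terms have the
right supremum; at limits only the stair matters. -/
def stairCSeq (c : Ordinal.{0} → Ordinal.{0} → Ordinal.{0}) (θ β : Ordinal.{0}) :
    Set Ordinal.{0} :=
  closureIn (stair c θ β ∪ {γ | γ + 1 = β}) β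

theorem isCSeq_stairCSeq {κ θ : Ordinal.{0}} {c : Ordinal.{0} → Ordinal.{0} → Ordinal.{0}}
    (hc : ColoringInto κ θ c) : IsCSeq κ (stairCSeq c θ) := by
  intro β hβ
  have hsub : stairCSeq c θ β ⊆ Iio β :=
    closureIn_subset <| union_subset stair_subset fun γ hγ =>
      mem_Iio.2 (hγ ▸ Order.lt_add_one_iff.2 le_rfl)
  refine ⟨hsub, isClosedIn_closureIn,
    le_antisymm (csSup_le_csSup' bddAbove_Iio hsub) (csSup_le' fun x hx => ?_)⟩
  have hbdd : BddAbove (stairCSeq c θ β) := bddAbove_Iio.mono hsub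
  rcases Ordinal.zero_or_succ_or_isSuccLimit β with rfl | ⟨γ, rfl⟩ | hlim
  · exact absurd (mem_Iio.1 hx) not_lt_zero
  · exact (Order.lt_succ_iff.1 hx).trans
      (le_csSup hbdd (Or.inl (Or.inr (Order.succ_eq_add_one γ).symm)))
  · obtain ⟨y, hy, hxy⟩ := isUnboundedIn_stair hc hlim hβ x hx
    exact hxy.le.trans (le_csSup hbdd (Or.inl (Or.inl hy)))

theorem IsUnboundedIn.stair_of_stairCSeq {θ β δ : Ordinal.{0}}
    {c : Ordinal.{0} → Ordinal.{0} → Ordinal.{0}} (hδβ : δ < β)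
    (h : IsUnboundedIn (stairCSeq c θ β ∩ Iio δ) δ) : IsUnboundedIn (stair c θ β ∩ Iio δ) δ :=
  h.of_closureIn.mono fun _ ⟨hx, hxδ⟩ => ⟨hx.resolve_right fun hxβ =>
    (Order.add_one_le_iff.2 hxδ).not_gt (hxβ ▸ hδβ), hxδ⟩

theorem exists_isUnboundedIn_inter_of_subset_biUnion {δ : Ordinal.{0}} {X s : Set Ordinal.{0}}
    {Y : Ordinal.{0} → Set Ordinal.{0}} (hX : IsUnboundedIn X δ) (hcov : X ⊆ ⋃ β ∈ s, Y β)
    (hs : #s < lift.{1} δ.cof) : ∃ β ∈ s, IsUnboundedIn (Y β ∩ X) δ := by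
  by_contra! h
  choose! z hzδ hz using fun β hβ => by simpa [IsUnboundedIn] using h β hβ
  have hzs : z '' s ⊆ Iio δ := by rintro _ ⟨β, hβ, rfl⟩; exact hzδ β hβ
  have hsup : sSup (z '' s) < δ := sSup_lt_of_mk_lt_cof hzs (mk_image_le.trans_lt hs)
  obtain ⟨x, hx, hzx⟩ := hX _ hsup
  obtain ⟨β, hβ, hxβ⟩ := mem_iUnion₂.1 (hcov hx)
  exact hzx.not_ge ((hz β hβ x hxβ hx).trans (le_csSup (bddAbove_Iio.mono hzs) ⟨β, hβ, rfl⟩))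

/-- As `#s < cf δ₁`, some `β ∈ s` has `stairCSeq c θ β` unbounded in `δ₁`; this set lies below
`β`, so `β ≥ δ₂` by `hlow`. -/
theorem exists_color_le_of_subset_biUnion {κ θ : Ordinal.{0}}
    {c : Ordinal.{0} → Ordinal.{0} → Ordinal.{0}} (hc : ColoringInto κ θ c)
    {Sta : Set Ordinal.{0}} (hclosed : IsClosedColoringOn Sta κ θ c)
    {Δ s : Set Ordinal.{0}} {δ₁ δ₂ t : Ordinal.{0}} (hs : s ⊆ Iio κ)
    (hcov : Δ ∩ Iio δ₂ ⊆ ⋃ β ∈ s, stairCSeq c θ β) (hδ₁ : δ₁ ∈ Sta)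
    (hΔ : IsUnboundedIn (Δ ∩ Iio δ₁) δ₁) (hsδ₁ : #s < lift.{1} δ₁.cof)
    (hlow : ∀ β ∈ s, β < δ₂ → β < δ₁) (hδ₁t : δ₁ ≤ t) (ht : t < δ₂) :
    ∃ β ∈ s, δ₂ ≤ β ∧ c δ₁ β ≤ reachIndex c θ β t := by
  have h0 : 0 < δ₁ := by
    by_contra! h
    rw [nonpos_iff_eq_zero.1 h, Ordinal.cof_zero, lift_zero] at hsδ₁
    exact not_lt_zero hsδ₁
  obtain ⟨β, hβs, hβ⟩ := exists_isUnboundedIn_inter_of_subset_biUnion hΔ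
    (fun x hx => hcov ⟨hx.1, (mem_Iio.1 hx.2).trans (hδ₁t.trans_lt ht)⟩) hsδ₁
  have hβ : IsUnboundedIn (stairCSeq c θ β ∩ Iio δ₁) δ₁ :=
    hβ.mono fun x hx => ⟨hx.1, hx.2.2⟩
  have hδ₂β : δ₂ ≤ β := not_lt.1 fun hβδ₂ => by
    obtain ⟨x, ⟨hxβ, -⟩, hβx⟩ := hβ β (hlow β hβs hβδ₂)
    exact (mem_Iio.1 ((isCSeq_stairCSeq hc β (hs hβs)).1 hxβ)).not_gt hβx
  have hδ₁β : δ₁ < β := (hδ₁t.trans_lt ht).trans_le hδ₂β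
  refine ⟨β, hβs, hδ₂β, ?_⟩
  calc c δ₁ β ≤ reachIndex c θ β δ₁ :=
        color_le_reachIndex hc hclosed (hs hβs) hδ₁ h0 hδ₁β (hβ.stair_of_stairCSeq hδ₁β)
    _ ≤ reachIndex c θ β t := reachIndex_mono hc hδ₁t (ht.trans_le hδ₂β) (hs hβs)

def blockShift (s : Set Ordinal.{0}) (d x : Ordinal.{0}) : Ordinal.{0} :=
  if d < x then x else sSup (insert d s) + 1 + x

/-- `{d} ∪ (s \ [0, d])`, padded by a copy of `s ∩ [0, d]` placed above `s` to have size exactly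
`#s + 1`: the sets fed to `U(κ, 2, θ, χ)` must all have the same size. -/
def block (s : Set Ordinal.{0}) (d : Ordinal.{0}) : Set Ordinal.{0} :=
  insert d (blockShift s d '' s)

section Block

variable {s : Set Ordinal.{0}} {d : Ordinal.{0}}

theorem mem_block_self : d ∈ block s d := mem_insert _ _

theorem mem_block_of_le {x : Ordinal.{0}} (hx : x ∈ s) (hdx : d ≤ x) : x ∈ block s d :=
  hdx.eq_or_lt.elim (fun h => h ▸ mem_insert _ _) fun h =>
    mem_insert_of_mem _ ⟨x, hx, if_pos h⟩

theorem lt_sSup_insert_add_one (hs : BddAbove s) {x : Ordinal.{0}} (hx : x ∈ insert d s) :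
    x < sSup (insert d s) + 1 :=
  Order.lt_add_one_iff.2 (le_csSup (hs.insert d) hx)

theorem lt_blockShift (hs : BddAbove s) (x : Ordinal.{0}) : d < blockShift s d x := by
  unfold blockShift
  split_ifs with h
  · exact h
  · exact (lt_sSup_insert_add_one hs (mem_insert d s)).trans_le le_self_add

theorem le_of_mem_block (hs : BddAbove s) {y : Ordinal.{0}} (hy : y ∈ block s d) : d ≤ y := by
  obtain rfl | ⟨x, -, rfl⟩ := hy
  exacts [le_rfl, (lt_blockShift hs x).le]

theorem mk_block (hs : BddAbove s) : #(block s d) = #s + 1 := by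
  have hlt : ∀ x ∈ s, ∀ y, x < sSup (insert d s) + 1 + y := fun x hx y =>
    (lt_sSup_insert_add_one hs (mem_insert_of_mem d hx)).trans_le le_self_add
  rw [block, mk_insert, mk_image_eq_of_injOn]
  · intro x hx y hy hxy
    unfold blockShift at hxy
    split_ifs at hxy
    · exact hxy
    · exact absurd hxy (hlt x hx y).ne
    · exact absurd hxy.symm (hlt y hy x).ne
    · exact add_left_cancel hxy
  · rintro ⟨x, -, hx⟩
    exact (lt_blockShift hs x).ne' hx

variable {κ : Cardinal.{0}} (hκ : κ.IsRegular) (hs : s ⊆ Iio κ.ord) (hsκ : #s < lift.{1} κ)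
  (hd : d < κ.ord)
include hκ hs hsκ hd

theorem block_subset : block s d ⊆ Iio κ.ord := by
  have hτ : sSup (insert d s) + 1 < κ.ord :=
    (isSuccLimit_ord hκ.aleph0_le).add_one_lt <| sSup_lt_ord_of_mk_lt hκ (insert_subset hd hs) <|
      mk_insert_le.trans_lt (add_one_lt_of_lt (aleph0_le_lift.2 hκ.aleph0_le) hsκ)
  rintro _ (rfl | ⟨x, hx, rfl⟩)
  · exact hd
  · unfold blockShift
    split_ifs
    · exact hs hx
    · exact Ordinal.isPrincipal_add_ord hκ.aleph0_le hτ (hs hx)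

theorem sSup_block_lt : sSup (block s d) < κ.ord :=
  sSup_lt_ord_of_mk_lt hκ (block_subset hκ hs hsκ hd) <| by
    rw [mk_block (bddAbove_Iio.mono hs)]
    exact add_one_lt_of_lt (aleph0_le_lift.2 hκ.aleph0_le) hsκ

end Block

def separatedSeq (X : Set Ordinal.{0}) (top : Ordinal.{0} → Ordinal.{0}) :
    Ordinal.{0} → Ordinal.{0} :=
  Ordinal.lt_wf.fix fun k δ => sInf {x ∈ X | sSup (range fun j : Iio k => top (δ j j.2)) < x}

theorem separatedSeq_eq (X : Set Ordinal.{0}) (top : Ordinal.{0} → Ordinal.{0})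
    (k : Ordinal.{0}) : separatedSeq X top k =
      sInf {x ∈ X | sSup ((top ∘ separatedSeq X top) '' Iio k) < x} := by
  rw [separatedSeq, WellFounded.fix_eq, image_eq_range]
  rfl

theorem separatedSeq_spec {κ : Cardinal.{0}} (hκ : κ.IsRegular) {X : Set Ordinal.{0}}
    (hXu : IsUnboundedIn X κ.ord) {top : Ordinal.{0} → Ordinal.{0}}
    (htop : ∀ d ∈ X, top d < κ.ord) {k : Ordinal.{0}} (hk : k < κ.ord) :
    separatedSeq X top k ∈ X ∧
      sSup ((top ∘ separatedSeq X top) '' Iio k) < separatedSeq X top k := by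
  induction k using WellFoundedLT.induction with
  | _ k IH =>
    have hsup : sSup ((top ∘ separatedSeq X top) '' Iio k) < κ.ord :=
      sSup_lt_ord_of_mk_lt hκ (by rintro _ ⟨j, hj, rfl⟩; exact htop _ (IH j hj (hj.trans hk)).1)
        (mk_image_Iio_lt hk _)
    rw [separatedSeq_eq X top k]
    exact csInf_mem (hXu _ hsup)

theorem exists_separated_seq {κ : Cardinal.{0}} (hκ : κ.IsRegular) {X : Set Ordinal.{0}}
    (hXu : IsUnboundedIn X κ.ord) {top : Ordinal.{0} → Ordinal.{0}}
    (htop : ∀ d ∈ X, top d < κ.ord) :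
    ∃ δ floor : Ordinal.{0} → Ordinal.{0}, ∀ k < κ.ord,
      δ k ∈ X ∧ floor k < δ k ∧ ∀ j < k, top (δ j) ≤ floor k :=
  ⟨separatedSeq X top, fun k => sSup ((top ∘ separatedSeq X top) '' Iio k), fun _ hk =>
    ⟨(separatedSeq_spec hκ hXu htop hk).1, (separatedSeq_spec hκ hXu htop hk).2,
      fun j hj => le_csSup Ordinal.bddAbove_of_small ⟨j, hj, rfl⟩⟩⟩

theorem WitnessU.exists_lt_of_isUnboundedIn {κ θ χ χ' : Cardinal.{0}}
    {c : Ordinal.{0} → Ordinal.{0} → Ordinal.{0}} (hwit : WitnessU κ 2 θ χ c)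
    (hκ : κ.IsRegular) (hχ' : χ' < χ) {K : Set Ordinal.{0}} (hK : K ⊆ Iio κ.ord)
    (hKu : IsUnboundedIn K κ.ord) {a : Ordinal.{0} → Set Ordinal.{0}}
    (ha : ∀ k ∈ K, a k ⊆ Iio κ.ord ∧ MkEq (a k) χ') (hne : ∀ k ∈ K, (a k).Nonempty)
    (hsep : ∀ j ∈ K, ∀ k ∈ K, j < k → ∀ x ∈ a j, ∀ y ∈ a k, x < y) {i : Ordinal.{0}}
    (hi : i < θ.ord) : ∃ j ∈ K, ∃ k ∈ K, j < k ∧ ∀ x ∈ a j, ∀ y ∈ a k, i < c x y := by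
  have hdisj : ∀ j ∈ K, ∀ k ∈ K, j ≠ k → Disjoint (a j) (a k) := by
    intro j hj k hk hjk
    refine disjoint_left.2 fun x hxj hxk => ?_
    rcases hjk.lt_or_gt with h | h
    exacts [(hsep j hj k hk h x hxj x hxk).false, (hsep k hk j hj h x hxk x hxj).false]
  have hinj : InjOn a K := fun j hj k hk h => by_contra fun hjk =>
    let ⟨x, hx⟩ := hne j hj
    disjoint_left.1 (hdisj j hj k hk hjk) hx (h ▸ hx)
  obtain ⟨B, hBA, hB2, hB⟩ := hwit χ' hχ' (a '' K) (by rintro _ ⟨k, hk, rfl⟩; exact ha k hk)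
    (by rw [MkEq, mk_image_eq_of_injOn _ _ hinj]; exact hKu.mk_eq hκ hK)
    (by rintro _ ⟨j, hj, rfl⟩ _ ⟨k, hk, rfl⟩ hjk; exact hdisj j hj k hk fun h => hjk (h ▸ rfl))
    i hi
  obtain ⟨⟨_, hx⟩, ⟨_, hy⟩, hxy⟩ := two_le_iff.1 (by rw [MkEq.eq_def] at hB2; simp [hB2] : 2 ≤ #B)
  obtain ⟨j, hj, rfl⟩ := hBA hx
  obtain ⟨k, hk, rfl⟩ := hBA hy
  rcases (show j ≠ k by rintro rfl; exact hxy rfl).lt_or_gt with h | h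
  · exact ⟨j, hj, k, hk, h, hB _ hx _ hy (hsep j hj k hk h)⟩
  · exact ⟨k, hk, j, hj, h, hB _ hy _ hx (hsep k hk j hj h)⟩

theorem IsCSeqOn.mem_succ {Γ : Set Ordinal.{0}} {C : Ordinal.{0} → Set Ordinal.{0}}
    (hC : IsCSeqOn Γ C) {y : Ordinal.{0}} (hy : Order.succ y ∈ Γ) (h0 : 0 < y) :
    y ∈ C (Order.succ y) := by
  obtain ⟨hsub, hcl, hsup⟩ := hC _ hy
  by_contra hyC
  have hsub' : C (Order.succ y) ⊆ Iio y := fun x hx =>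
    (Order.lt_succ_iff.1 (hsub hx)).lt_of_ne (show x ≠ y by rintro rfl; exact hyC hx)
  refine hyC (hcl y (Order.lt_succ y) h0 ?_)
  rw [inter_eq_self_of_subset_left hsub', hsup, Order.Iio_succ, csSup_Iic]

theorem cSeqCovers_self {κ : Cardinal.{0}} (hκ : ℵ₀ ≤ κ) {C : Ordinal.{0} → Set Ordinal.{0}}
    (hC : IsCSeq κ.ord C) : CSeqCovers κ (Iio κ.ord) C κ := by
  have hlim := isSuccLimit_ord hκ
  refine ⟨Order.succ '' Iio κ.ord, fun _ => Iio κ.ord, ?_, ?_, fun _ _ => ⟨subset_rfl, ?_⟩, ?_⟩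
  · rintro _ ⟨x, hx, rfl⟩
    exact hlim.succ_lt hx
  · rw [MkEq, mk_image_eq_of_injOn _ _ Order.succ_injective.injOn, mk_Iio_ordinal, card_ord]
  · rw [MkEq, mk_Iio_ordinal, card_ord]
  · rintro α - _ ⟨⟨x, hx, rfl⟩, -⟩
    have hx' := hlim.succ_lt hx
    exact mem_iUnion₂.2 ⟨_, hlim.succ_lt hx', hC.mem_succ (hlim.succ_lt hx') (Order.bot_lt_succ x)⟩

/-- Fodor's lemma applied to `δ ↦ sup (b δ ∩ δ)` on the stationary set of `δ ∈ S` in which `Δ`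
is unbounded. -/
theorem IsStationaryIn.exists_isUnboundedIn_lowPart_le {κ : Cardinal.{0}} (hκ : κ.IsRegular)
    (hκ₀ : ℵ₀ < κ) {S Δ : Set Ordinal.{0}} (hS : IsStationaryIn S κ.ord) (hΔκ : Δ ⊆ Iio κ.ord)
    (hΔ : IsUnboundedIn Δ κ.ord) {b : Ordinal.{0} → Set Ordinal.{0}}
    (hb : ∀ δ ∈ S, #(b δ) < lift.{1} δ.cof) :
    ∃ ε < κ.ord, IsUnboundedIn {δ | δ ∈ S ∧ IsUnboundedIn (Δ ∩ Iio δ) δ ∧ ε < δ ∧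
      ∀ β ∈ b δ, β < δ → β ≤ ε} κ.ord := by
  have hS' := hS.inter_closurePoints hκ hκ₀ fun ε hε => hΔκ (nextAbove_mem hΔ hε).1
  obtain ⟨ε, hε, hu⟩ := hS'.exists_isUnboundedIn_le hκ hκ₀ (g := fun δ => sSup (b δ ∩ Iio δ))
    fun δ hδ => sSup_lt_of_mk_lt_cof inter_subset_right
      ((mk_le_mk_of_subset inter_subset_left).trans_lt (hb δ hδ.1))
  refine ⟨ε, hε, (hu.inter_Ioi hε).mono ?_⟩
  rintro δ ⟨⟨⟨hδS, hδΔ⟩, hg⟩, hεδ⟩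
  exact ⟨hδS, isUnboundedIn_inter_Iio_of_mem_closurePoints hΔ hδΔ, hεδ, fun β hβ hβδ =>
    (le_csSup (bddAbove_Iio.mono inter_subset_right) ⟨hβ, hβδ⟩).trans hg⟩

/-- Fodor bounds the part of `b δ` below `δ` by a single `ε`; the points `δ k` are then taken
above `ε`, so the `β` found by the crossing step lies above `δ k`. -/
theorem exists_crossing_seq {κ χ : Cardinal.{0}} {θ : Ordinal.{0}} (hκ : κ.IsRegular)
    (hκ₀ : ℵ₀ < κ) (hχκ : χ < κ) (hχθ : χ ≤ θ.cof) {Sta : Set Ordinal.{0}}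
    (hStaSub : Sta ⊆ {α | α < κ.ord ∧ χ ≤ α.cof}) (hStaStat : IsStationaryIn Sta κ.ord)
    {c : Ordinal.{0} → Ordinal.{0} → Ordinal.{0}} (hc : ColoringInto κ.ord θ c)
    (hclosed : IsClosedColoringOn Sta κ.ord θ c) {Δ : Set Ordinal.{0}}
    {b : Ordinal.{0} → Set Ordinal.{0}} (hΔκ : Δ ⊆ Iio κ.ord) (hΔ : #Δ = lift.{1} κ)
    (hb : ∀ d < κ.ord, b d ⊆ Iio κ.ord ∧ #(b d) < lift.{1} χ)
    (hcov : ∀ α < κ.ord, Δ ∩ Iio α ⊆ ⋃ β ∈ b α, stairCSeq c θ β) :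
    ∃ δ T : Ordinal.{0} → Ordinal.{0}, ∀ k < κ.ord, δ k < κ.ord ∧ T k < θ ∧
      ∀ j < k, sSup (block (b (δ j)) (δ j)) < δ k ∧ ∃ β ∈ b (δ k), δ k ≤ β ∧ c (δ j) β ≤ T k := by
  have hbκ : ∀ d < κ.ord, #(b d) < lift.{1} κ := fun d hd =>
    (hb d hd).2.trans (lift_lt.2 hχκ)
  obtain ⟨ε, -, hX⟩ := hStaStat.exists_isUnboundedIn_lowPart_le hκ hκ₀ hΔκ
    (isUnboundedIn_of_mk_eq hκ.aleph0_le hΔ) (b := b) fun δ hδ =>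
      (hb δ (hStaSub hδ).1).2.trans_le (lift_le.2 (hStaSub hδ).2)
  obtain ⟨δ, floor, hδ⟩ := exists_separated_seq hκ hX (top := fun d => sSup (block (b d) d))
    fun d hd => sSup_block_lt hκ (hb d (hStaSub hd.1).1).1 (hbκ d (hStaSub hd.1).1)
      (hStaSub hd.1).1
  refine ⟨δ, fun k => sSup ((fun β => reachIndex c θ β (floor k)) '' (b (δ k) ∩ Ici (δ k))),
    fun k hk => ?_⟩
  obtain ⟨⟨hkSta, -, -, hklow⟩, hfloor, htop⟩ := hδ k hk
  have hδκ : δ k < κ.ord := (hStaSub hkSta).1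
  have hs : b (δ k) ∩ Ici (δ k) ⊆ Iio κ.ord := inter_subset_left.trans (hb _ hδκ).1
  have hts : ∀ β ∈ b (δ k) ∩ Ici (δ k), floor k < β := fun β hβ => hfloor.trans_le hβ.2
  refine ⟨hδκ, sSup_lt_of_mk_lt_cof (reachIndex_image_subset hc hs hts) ?_,
    fun j hj => ⟨(htop j hj).trans_lt hfloor, ?_⟩⟩
  · exact mk_image_le.trans_lt <| (mk_le_mk_of_subset inter_subset_left).trans_lt <|
      (hb _ hδκ).2.trans_le (lift_le.2 hχθ)
  obtain ⟨⟨hjSta, hjΔ, hεj, -⟩, -⟩ := hδ j (hj.trans hk)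
  have hδj : δ j ≤ floor k :=
    (le_csSup (bddAbove_Iio.mono (block_subset hκ (hb _ (hStaSub hjSta).1).1
      (hbκ _ (hStaSub hjSta).1) (hStaSub hjSta).1)) mem_block_self).trans (htop j hj)
  obtain ⟨β, hβb, hδβ, hcβ⟩ := exists_color_le_of_subset_biUnion hc hclosed (hb _ hδκ).1
    (hcov _ hδκ) hjSta hjΔ ((hb _ hδκ).2.trans_le (lift_le.2 (hStaSub hjSta).2))
    (fun β hβ hβk => (hklow β hβ hβk).trans_lt hεj) hδj hfloor
  exact ⟨β, hβb, hδβ, hcβ.trans <|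
    le_csSup (bddAbove_Iio.mono (reachIndex_image_subset hc hs hts)) ⟨β, ⟨hβb, hδβ⟩, rfl⟩⟩

theorem not_cSeqCovers_stairCSeq {κ χ θ χ' : Cardinal.{0}} (hκ : κ.IsRegular)
    (hκ₀ : ℵ₀ < κ) (hχ : ℵ₀ ≤ χ) (hχθ : χ ≤ θ) (hθreg : θ.IsRegular) (hθκ : θ < κ)
    {Sta : Set Ordinal.{0}} (hStaSub : Sta ⊆ {α | α < κ.ord ∧ χ ≤ α.cof})
    (hStaStat : IsStationaryIn Sta κ.ord) {c : Ordinal.{0} → Ordinal.{0} → Ordinal.{0}}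
    (hc : ColoringInto κ.ord θ.ord c) (hclosed : IsClosedColoringOn Sta κ.ord θ.ord c)
    (hwit : WitnessU κ 2 θ χ c) (hχ' : χ' < χ) :
    ¬ CSeqCovers κ (Iio κ.ord) (stairCSeq c θ.ord) χ' := by
  rintro ⟨Δ, b, hΔκ, hΔ, hb, hcov⟩
  have hχκ : χ < κ := hχθ.trans_lt hθκ
  have hbχ : ∀ d < κ.ord, b d ⊆ Iio κ.ord ∧ #(b d) < lift.{1} χ := fun d hd =>
    ⟨(hb d hd).1, (hb d hd).2.trans_lt (lift_lt.2 hχ')⟩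
  obtain ⟨δ, T, hδ⟩ := exists_crossing_seq hκ hκ₀ hχκ (hθreg.cof_ord.symm ▸ hχθ) hStaSub
    hStaStat hc hclosed hΔκ hΔ hbχ hcov
  obtain ⟨i, hi, hK⟩ := exists_isUnboundedIn_le_of_lt hκ (ord_lt_ord.2 hθκ)
    fun k hk => (hδ k hk).2.1
  have hbdd : ∀ k < κ.ord, BddAbove (b (δ k)) := fun k hk => bddAbove_Iio.mono (hb _ (hδ k hk).1).1
  have hblock : ∀ k < κ.ord, block (b (δ k)) (δ k) ⊆ Iio κ.ord := fun k hk =>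
    block_subset hκ (hbχ _ (hδ k hk).1).1 ((hbχ _ (hδ k hk).1).2.trans (lift_lt.2 hχκ))
      (hδ k hk).1
  obtain ⟨j, -, k, ⟨hkκ, hTk⟩, hjk, hbig⟩ :=
    hwit.exists_lt_of_isUnboundedIn hκ (add_one_lt_of_lt hχ hχ') (fun k hk => hk.1) hK
      (a := fun k => block (b (δ k)) (δ k))
      (fun k hk => ⟨hblock k hk.1, by
        rw [MkEq, mk_block (hbdd k hk.1), (hb _ (hδ k hk.1).1).2, lift_add, lift_one]⟩)
      (fun k _ => ⟨_, mem_block_self⟩)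
      (fun j hj k hk hjk x hx y hy =>
        calc x ≤ sSup (block (b (δ j)) (δ j)) := le_csSup (bddAbove_Iio.mono (hblock j hj.1)) hx
          _ < δ k := ((hδ k hk.1).2.2 j hjk).1
          _ ≤ y := le_of_mem_block (hbdd k hk.1) hy) hi
  obtain ⟨β, hβb, hδβ, hcβ⟩ := ((hδ k hkκ).2.2 j hjk).2
  exact (hbig _ mem_block_self β (mem_block_of_le hβb hδβ)).not_ge (hcβ.trans hTk)

theorem statement17
    (κ : Cardinal.{0}) (hκreg : κ.IsRegular) (hκunc : Cardinal.aleph0 < κ)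
    (χ θ : Cardinal.{0}) (hχ : Cardinal.aleph0 ≤ χ) (hχθ : χ ≤ θ)
    (hθreg : θ.IsRegular) (hθκ : θ < κ)
    (Sta : Set Ordinal.{0}) (hStaSub : Sta ⊆ {α | α < κ.ord ∧ χ ≤ α.cof})
    (hStaStat : IsStationaryIn Sta κ.ord)
    (c : Ordinal.{0} → Ordinal.{0} → Ordinal.{0})
    (hc : ColoringInto κ.ord θ.ord c)
    (hclosed : IsClosedColoringOn Sta κ.ord θ.ord c)
    (hwit : WitnessU κ 2 θ χ c) :
    χ ≤ chiNum κ := by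
  refine le_csInf ⟨κ, le_rfl, fun C hC => cSeqCovers_self hκreg.aleph0_le hC⟩ ?_
  rintro χ' ⟨-, hcov⟩
  by_contra! hχ'
  exact not_cSeqCovers_stairCSeq hκreg hκunc hχ hχθ hθreg hθκ hStaSub hStaStat hc hclosed hwit
    hχ' (hcov _ (isCSeq_stairCSeq hc))

end CSeq
end
end
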